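/- Let β > 0, γ = β²/2, δ = β²/(2(1+β²)), and let h : ℝ → ℝ be such that x ↦ (1 + x²) h(x) is Lebesgue integrable. Then ∬_{ℝ²} e^{-γ(x-y)²} (x-y)² h(x) φ(y) dx dy = (1+β²)^{-5/2} ∫_{ℝ} e^{-δ x²} (x² + β² + 1) h(x) dx. -/

import Mathlib

/-!
Since `(x - y)² ≤ 2 (1 + x²)(1 + y²)`, Fubini lets us integrate in `y` first. Completing
the square, `e^{-γ(x-y)²} φ(y) = (1+2γ)^{-1/2} e^{-δx²} p(y)` with `δ = γ/(1+2γ)` and `p`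
the density of `N(2γx/(1+2γ), 1/(1+2γ))`, whose second moment about `x` is
`x²/(1+2γ)² + 1/(1+2γ)`.
-/

open MeasureTheory Real

/-- The standard normal density `φ(x) = (2π)^{-1/2} e^{-x²/2}`. -/
noncomputable def stdNormalPDF (x : ℝ) : ℝ :=
  (Real.sqrt (2 * Real.pi))⁻¹ * Real.exp (-x ^ 2 / 2)

open ProbabilityTheory
open scoped NNReal

lemma integral_sub_sq_gaussianReal (x m : ℝ) (v : ℝ≥0) :
    ∫ y, (x - y) ^ 2 ∂gaussianReal m v = (x - m) ^ 2 + v := by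
  have hvar := variance_eq_sub (memLp_id_gaussianReal (μ := x - m) (v := v) 2)
  simp only [variance_id_gaussianReal, Pi.pow_apply, id, integral_id_gaussianReal] at hvar
  rw [← gaussianReal_map_const_sub x, integral_map (by fun_prop) (by fun_prop)] at hvar
  linarith

lemma exp_neg_mul_sub_sq_mul_stdNormalPDF {γ : ℝ} (hγ : 0 < 1 + 2 * γ) (x y : ℝ) :
    exp (-γ * (x - y) ^ 2) * stdNormalPDF y
      = (√(1 + 2 * γ))⁻¹ * exp (-(γ / (1 + 2 * γ)) * x ^ 2)
        * gaussianPDFReal (2 * γ * x / (1 + 2 * γ)) (1 + 2 * γ)⁻¹.toNNReal y := by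
  rw [gaussianPDFReal, coe_toNNReal _ (by positivity), stdNormalPDF]
  -- `field_simp` only clears the denominator `1 + 2 * γ` once it is an atom
  generalize hB : 1 + 2 * γ = B at *
  obtain rfl : γ = (B - 1) / 2 := by linarith
  have hexp : -((B - 1) / 2) * (x - y) ^ 2 + -y ^ 2 / 2
      = -((B - 1) / 2 / B) * x ^ 2 + -(y - 2 * ((B - 1) / 2) * x / B) ^ 2 / (2 * B⁻¹) := by
    field_simp
    ring
  have hsqrt : √(2 * π * B⁻¹) = √(2 * π) / √B := by
    rw [sqrt_mul (by positivity), sqrt_inv, div_eq_mul_inv]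
  have hsqrtB : √B ≠ 0 := by positivity
  rw [hsqrt, mul_left_comm, ← exp_add, hexp, exp_add]
  field_simp

lemma integral_exp_neg_mul_sub_sq_mul_sub_sq_mul_stdNormalPDF {γ : ℝ} (hγ : 0 < 1 + 2 * γ)
    (x : ℝ) :
    ∫ y, exp (-γ * (x - y) ^ 2) * (x - y) ^ 2 * stdNormalPDF y
      = (1 + 2 * γ) ^ (-(5 / 2) : ℝ)
          * (exp (-(γ / (1 + 2 * γ)) * x ^ 2) * (x ^ 2 + (1 + 2 * γ))) := by
  have hv : (1 + 2 * γ)⁻¹.toNNReal ≠ 0 := by simpa using hγ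
  calc ∫ y, exp (-γ * (x - y) ^ 2) * (x - y) ^ 2 * stdNormalPDF y
      = (√(1 + 2 * γ))⁻¹ * exp (-(γ / (1 + 2 * γ)) * x ^ 2)
          * ∫ y, (x - y) ^ 2
              ∂gaussianReal (2 * γ * x / (1 + 2 * γ)) (1 + 2 * γ)⁻¹.toNNReal := by
        rw [integral_gaussianReal_eq_integral_smul hv, ← integral_const_mul]
        congr 1 with y
        rw [mul_right_comm, exp_neg_mul_sub_sq_mul_stdNormalPDF hγ, smul_eq_mul]
        ring
    _ = _ := by
        rw [integral_sub_sq_gaussianReal, coe_toNNReal _ (by positivity)]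
        rw [show -(5 / 2 : ℝ) = -(1 / 2) - (2 : ℕ) by norm_num, rpow_sub_natCast hγ.ne',
          rpow_neg hγ.le, ← sqrt_eq_rpow]
        generalize hB : 1 + 2 * γ = B at *
        obtain rfl : γ = (B - 1) / 2 := by linarith
        field_simp
        ring

lemma integrable_one_add_sq_mul_stdNormalPDF :
    Integrable fun y => (1 + y ^ 2) * stdNormalPDF y := by
  have hexp := integrable_exp_neg_mul_sq (b := 1 / 2) (by norm_num)
  have hsq := integrable_rpow_mul_exp_neg_mul_sq (b := 1 / 2) (by norm_num) (s := 2)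
    (by norm_num)
  simp only [rpow_two] at hsq
  refine ((hexp.add hsq).const_mul (√(2 * π))⁻¹).congr (.of_forall fun y => ?_)
  simp only [stdNormalPDF, Pi.add_apply]
  ring_nf

lemma aestronglyMeasurable_of_integrable_one_add_sq_mul {h : ℝ → ℝ}
    (hh : Integrable fun x => (1 + x ^ 2) * h x) : AEStronglyMeasurable h := by
  have hinv : Continuous fun x : ℝ => (1 + x ^ 2)⁻¹ := by
    fun_prop (disch := intro x; positivity)
  refine (hinv.aestronglyMeasurable.mul hh.aestronglyMeasurable).congr (.of_forall fun x => ?_)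
  simp only [Pi.mul_apply]
  field_simp

lemma integrable_uncurry_exp_neg_mul_sub_sq_mul_sub_sq_mul_stdNormalPDF {γ : ℝ} (hγ : 0 ≤ γ)
    {h : ℝ → ℝ} (hh : Integrable fun x => (1 + x ^ 2) * h x) :
    Integrable (Function.uncurry fun y x =>
      exp (-γ * (x - y) ^ 2) * (x - y) ^ 2 * h x * stdNormalPDF y) (volume.prod volume) := by
  have hmeas : AEStronglyMeasurable (Function.uncurry fun y x =>
      exp (-γ * (x - y) ^ 2) * (x - y) ^ 2 * h x * stdNormalPDF y) (volume.prod volume) := by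
    have hh' := (aestronglyMeasurable_of_integrable_one_add_sq_mul hh).comp_snd
      (μ := (volume : Measure ℝ))
    have hkernel : Continuous fun p : ℝ × ℝ =>
        exp (-γ * (p.2 - p.1) ^ 2) * (p.2 - p.1) ^ 2 := by
      fun_prop
    have hφ : Continuous stdNormalPDF := by unfold stdNormalPDF; fun_prop
    exact (hkernel.aestronglyMeasurable.mul hh').mul (hφ.comp continuous_fst).aestronglyMeasurable
  refine ((integrable_one_add_sq_mul_stdNormalPDF.mul_prod hh.norm).const_mul 2).mono' hmeas
    (.of_forall fun ⟨y, x⟩ => ?_)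
  have hφ : 0 ≤ stdNormalPDF y := by unfold stdNormalPDF; positivity
  have hexp : exp (-γ * (x - y) ^ 2) ≤ 1 := exp_le_one_iff.2 (by nlinarith [sq_nonneg (x - y)])
  simp only [Function.uncurry_apply_pair, norm_mul, norm_of_nonneg hφ,
    norm_of_nonneg (exp_pos _).le, norm_of_nonneg (sq_nonneg _),
    norm_of_nonneg (by positivity : (0 : ℝ) ≤ 1 + x ^ 2)]
  have hsq : (x - y) ^ 2 ≤ 2 * ((1 + y ^ 2) * (1 + x ^ 2)) := by
    nlinarith [sq_nonneg (x + y), sq_nonneg (x * y)]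
  calc exp (-γ * (x - y) ^ 2) * (x - y) ^ 2 * ‖h x‖ * stdNormalPDF y
      ≤ 1 * (x - y) ^ 2 * ‖h x‖ * stdNormalPDF y := by gcongr
    _ ≤ 2 * ((1 + y ^ 2) * (1 + x ^ 2)) * ‖h x‖ * stdNormalPDF y := by rw [one_mul]; gcongr
    _ = _ := by ring

theorem gaussian_smoothing_square_integral_general (β : ℝ) (γ δ : ℝ)
    (hγ : γ = β ^ 2 / 2) (hδ : δ = β ^ 2 / (2 * (1 + β ^ 2)))
    (h : ℝ → ℝ) (hh : Integrable (fun x => (1 + x ^ 2) * h x)) :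
    (∫ y : ℝ, ∫ x : ℝ, Real.exp (-γ * (x - y) ^ 2) * (x - y) ^ 2 * h x * stdNormalPDF y)
      = (1 + β ^ 2) ^ (-(5 / 2) : ℝ)
          * ∫ x : ℝ, Real.exp (-δ * x ^ 2) * (x ^ 2 + β ^ 2 + 1) * h x := by
  have hγ₀ : 0 ≤ γ := hγ ▸ by positivity
  have hB : 1 + 2 * γ = 1 + β ^ 2 := by rw [hγ]; ring
  have hδγ : γ / (1 + β ^ 2) = δ := by rw [hγ, hδ, div_div]
  rw [integral_integral_swap
    (integrable_uncurry_exp_neg_mul_sub_sq_mul_sub_sq_mul_stdNormalPDF hγ₀ hh),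
    ← integral_const_mul]
  refine integral_congr_ae (.of_forall fun x => ?_)
  calc ∫ y, exp (-γ * (x - y) ^ 2) * (x - y) ^ 2 * h x * stdNormalPDF y
      = h x * ∫ y, exp (-γ * (x - y) ^ 2) * (x - y) ^ 2 * stdNormalPDF y := by
        rw [← integral_const_mul]
        congr 1 with y
        ring
    _ = _ := by
        rw [integral_exp_neg_mul_sub_sq_mul_sub_sq_mul_stdNormalPDF (by linarith), hB, hδγ]
        ring

/-- for `β > 0`, `γ = β²/2`, `δ = β²/(2(1+β²))` and any `h : ℝ → ℝ` such
that `x ↦ (1+x²)h(x)` is Lebesgue integrable,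
`∬ e^{-γ(x-y)²} (x-y)² h(x) φ(y) dx dy = (1+β²)^{-5/2} ∫ e^{-δx²} (x²+β²+1) h(x) dx`. -/
theorem gaussian_smoothing_square_integral (β : ℝ) (hβ : 0 < β) (γ δ : ℝ)
    (hγ : γ = β ^ 2 / 2) (hδ : δ = β ^ 2 / (2 * (1 + β ^ 2)))
    (h : ℝ → ℝ) (hh : Integrable (fun x => (1 + x ^ 2) * h x)) :
    (∫ y : ℝ, ∫ x : ℝ, Real.exp (-γ * (x - y) ^ 2) * (x - y) ^ 2 * h x * stdNormalPDF y)
      = (1 + β ^ 2) ^ (-(5 / 2) : ℝ)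
          * ∫ x : ℝ, Real.exp (-δ * x ^ 2) * (x ^ 2 + β ^ 2 + 1) * h x :=
  gaussian_smoothing_square_integral_general β γ δ hγ hδ h hh
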